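/- Let κ : ℝ → ℝ be continuous with finite limits κ₊ = lim_{x→+∞} κ(x) and κ₋ = lim_{x→−∞} κ(x) satisfying κ₊ κ₋ < 0. (i) If κ₊ > 0 > κ₋, then Ψ₀(x) = (0, exp(−∫₀ˣ κ(s) ds)) is a nonzero C¹ function ℝ → ℂ² satisfying 𝒟Ψ₀ = 0 pointwise, Ψ₀ ∈ L²(ℝ; ℂ²), and for every λ with 0 < λ < min(κ₊, −κ₋) there exists C > 0 such that |Ψ₀(x)| ≤ C e^{−λ|x|} for all x ∈ ℝ. (ii) If κ₊ < 0 < κ₋, the same conclusions hold for Ψ₀(x) = (exp(∫₀ˣ κ(s) ds), 0) with 0 < λ < min(−κ₊, κ₋). In particular, 0 is an L² eigenvalue of the Dirac operator 𝒟 with exponentially decaying eigenfunction whenever κ is of domain-wall type. -/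

import Mathlib

/-!
The primitive `∫₀ˣ κ` grows at least like `λ x` at `+∞` and like `-λ x` at `-∞` as soon as
`λ < κ₊` and `λ < -κ₋`, so `-∫₀ˣ κ + λ |x|` is bounded above; this is the bound
`e^{-∫₀ˣ κ} ≤ C e^{-λ|x|}`, and with `λ = min(κ₊, -κ₋)/2` it gives square integrability.
The `B`-mode solves `𝒟Ψ = 0` because `(Ψ^B)' = -κ Ψ^B`. Case (ii) is case (i) for `-κ`:
exchanging the two components while replacing `κ` by `-κ` preserves both the equation and the
norm, and turns the `B`-mode of `-κ` into the `A`-mode of `κ`.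
-/

noncomputable section

open Complex Real MeasureTheory Filter

/-- The domain-wall zero mode supported on the `B` sublattice:
`Ψ₀(x) = (0, exp(−∫₀ˣ κ(s) ds))`. -/
def zeroModeB (κ : ℝ → ℝ) (x : ℝ) : ℂ × ℂ :=
  ((0 : ℂ), Complex.exp (((-(∫ s in (0 : ℝ)..x, κ s)) : ℝ) : ℂ))

/-- The domain-wall zero mode supported on the `A` sublattice:
`Ψ₀(x) = (exp(∫₀ˣ κ(s) ds), 0)`. -/
def zeroModeA (κ : ℝ → ℝ) (x : ℝ) : ℂ × ℂ :=
  (Complex.exp (((∫ s in (0 : ℝ)..x, κ s) : ℝ) : ℂ), (0 : ℂ))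

/-- The one-dimensional Dirac equation `𝒟Ψ = 0` pointwise, where
`𝒟Ψ = (3/2)(−iσ₁Ψ′ + κσ₂Ψ)`. -/
def DiracZero (κ : ℝ → ℝ) (Ψ : ℝ → ℂ × ℂ) : Prop :=
  ∀ x : ℝ,
    (3 / 2 : ℂ) * (-I * deriv (fun y => (Ψ y).2) x - I * ((κ x : ℝ) : ℂ) * (Ψ x).2) = 0 ∧
    (3 / 2 : ℂ) * (-I * deriv (fun y => (Ψ y).1) x + I * ((κ x : ℝ) : ℂ) * (Ψ x).1) = 0

/-- Euclidean norm on `ℂ²`. -/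
def enorm2 (v : ℂ × ℂ) : ℝ := Real.sqrt (‖v.1‖ ^ 2 + ‖v.2‖ ^ 2)

open Set

lemma integrable_exp_neg_mul_abs {b : ℝ} (hb : 0 < b) :
    Integrable (fun x : ℝ => Real.exp (-b * |x|)) := by
  have hIoi : IntegrableOn (fun x : ℝ => Real.exp (-b * |x|)) (Ioi 0) := by
    refine (exp_neg_integrableOn_Ioi 0 hb).congr_fun (fun x hx => ?_) measurableSet_Ioi
    simp [abs_of_pos (mem_Ioi.mp hx)]
  rw [← integrableOn_univ, ← Iio_union_Ici (a := (0 : ℝ)), integrableOn_union,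
    integrableOn_Ici_iff_integrableOn_Ioi]
  refine ⟨?_, hIoi⟩
  rw [← (Measure.measurePreserving_neg (volume : Measure ℝ)).integrableOn_comp_preimage
      (Homeomorph.neg ℝ).measurableEmbedding]
  simpa only [Function.comp_def, abs_neg, neg_preimage, neg_Iio, neg_zero] using hIoi

lemma integrable_sq_of_abs_le_mul_exp_neg_mul_abs {f : ℝ → ℝ} (hf : AEStronglyMeasurable f)
    {C b : ℝ} (hb : 0 < b) (hfC : ∀ x, |f x| ≤ C * Real.exp (-b * |x|)) :
    Integrable fun x => f x ^ 2 := by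
  refine ((integrable_exp_neg_mul_abs (mul_pos two_pos hb)).const_mul (C ^ 2)).mono' (hf.pow 2)
    (ae_of_all _ fun x => ?_)
  calc ‖f x ^ 2‖ = |f x| ^ 2 := by simp
    _ ≤ (C * Real.exp (-b * |x|)) ^ 2 := pow_le_pow_left₀ (abs_nonneg _) (hfC x) 2
    _ = C ^ 2 * Real.exp (-(2 * b) * |x|) := by rw [mul_pow, ← Real.exp_nat_mul]; ring_nf

section Primitive

variable {κ : ℝ → ℝ}

lemma contDiff_integral_zero (hκ : Continuous κ) : ContDiff ℝ 1 fun x => ∫ s in 0..x, κ s := by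
  refine contDiff_one_iff_deriv.2
    ⟨fun x => (hκ.integral_hasStrictDerivAt 0 x).hasDerivAt.differentiableAt, ?_⟩
  simpa only [funext (hκ.deriv_integral κ 0)] using hκ

lemma bddAbove_range_neg_integral_add_mul_abs (hκ : Continuous κ) {lam : ℝ}
    (htop : ∀ᶠ s in atTop, lam ≤ κ s) (hbot : ∀ᶠ s in atBot, κ s ≤ -lam) :
    BddAbove (range fun x => -(∫ s in 0..x, κ s) + lam * |x|) := by
  obtain ⟨R₁, hR₁⟩ := eventually_atTop.1 htop
  obtain ⟨R₂, hR₂⟩ := eventually_atBot.1 hbot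
  obtain ⟨R, hR, hR₁R, hR₂R⟩ : ∃ R, 0 ≤ R ∧ R₁ ≤ R ∧ -R ≤ R₂ :=
    ⟨max R₁ (max (-R₂) 0), le_max_of_le_right (le_max_right _ _), le_max_left _ _,
      neg_le.2 (le_max_of_le_right (le_max_left _ _))⟩
  set g : ℝ → ℝ := fun x => -(∫ s in 0..x, κ s) + lam * |x|
  have hg : Continuous g := (contDiff_integral_zero hκ).continuous.neg.add (by fun_prop)
  obtain ⟨M, hM⟩ := (isCompact_Icc (a := -R) (b := R)).bddAbove_image hg.continuousOn
  have hMg : ∀ x ∈ Icc (-R) R, g x ≤ M := fun x hx => hM ⟨x, hx, rfl⟩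
  have hsub : ∀ a b, (∫ s in 0..b, κ s) - ∫ s in 0..a, κ s = ∫ s in a..b, κ s := fun a b =>
    intervalIntegral.integral_interval_sub_left (hκ.intervalIntegrable _ _)
      (hκ.intervalIntegrable _ _)
  refine ⟨M, forall_mem_range.2 fun x => ?_⟩
  rcases le_or_gt x (-R) with hx | hx
  · have hint : (∫ s in x..-R, κ s) ≤ (-R - x) * -lam := by
      simpa only [intervalIntegral.integral_const, smul_eq_mul] using
        intervalIntegral.integral_mono_on (μ := volume) hx (hκ.intervalIntegrable _ _)
          intervalIntegrable_const fun s hs => hR₂ s (hs.2.trans hR₂R)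
    have hgx : g x ≤ g (-R) := by
      simp only [g, abs_of_nonpos (hx.trans (neg_nonpos.2 hR)), abs_neg, abs_of_nonneg hR]
      linarith [hsub x (-R)]
    exact hgx.trans (hMg _ ⟨le_rfl, by linarith⟩)
  rcases le_or_gt x R with hx' | hx'
  · exact hMg x ⟨hx.le, hx'⟩
  · have hint : (x - R) * lam ≤ ∫ s in R..x, κ s := by
      simpa only [intervalIntegral.integral_const, smul_eq_mul] using
        intervalIntegral.integral_mono_on (μ := volume) hx'.le intervalIntegrable_const
          (hκ.intervalIntegrable _ _) fun s hs => hR₁ s (hR₁R.trans hs.1)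
    have hgx : g x ≤ g R := by
      simp only [g, abs_of_nonneg hR, abs_of_nonneg (hR.trans hx'.le)]
      linarith [hsub R x]
    exact hgx.trans (hMg _ ⟨by linarith, le_rfl⟩)

lemma exists_exp_neg_integral_le_mul_exp_neg_mul_abs (hκ : Continuous κ) {lam : ℝ}
    (htop : ∀ᶠ s in atTop, lam ≤ κ s) (hbot : ∀ᶠ s in atBot, κ s ≤ -lam) :
    ∃ C > 0, ∀ x, Real.exp (-∫ s in 0..x, κ s) ≤ C * Real.exp (-lam * |x|) := by
  obtain ⟨M, hM⟩ := bddAbove_range_neg_integral_add_mul_abs hκ htop hbot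
  refine ⟨Real.exp M, Real.exp_pos M, fun x => ?_⟩
  calc Real.exp (-∫ s in 0..x, κ s)
      = Real.exp (-(∫ s in 0..x, κ s) + lam * |x|) * Real.exp (-lam * |x|) := by
        rw [← Real.exp_add]; ring_nf
    _ ≤ Real.exp M * Real.exp (-lam * |x|) := by gcongr; exact hM ⟨x, rfl⟩

end Primitive

def IsDecayingZeroMode (κ : ℝ → ℝ) (a b : ℝ) (Ψ : ℝ → ℂ × ℂ) : Prop :=
  (∃ x, Ψ x ≠ 0) ∧ ContDiff ℝ 1 Ψ ∧ DiracZero κ Ψ ∧ Integrable (fun x => enorm2 (Ψ x) ^ 2) ∧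
    ∀ lam : ℝ, 0 < lam → lam < min a b →
      ∃ C > (0 : ℝ), ∀ x : ℝ, enorm2 (Ψ x) ≤ C * Real.exp (-lam * |x|)

section ZeroMode

variable {κ : ℝ → ℝ}

lemma zeroModeB_ne_zero (x : ℝ) : zeroModeB κ x ≠ 0 := by
  simp [zeroModeB, Prod.ext_iff, Complex.exp_ne_zero]

lemma enorm2_zeroModeB (x : ℝ) : enorm2 (zeroModeB κ x) = Real.exp (-∫ s in 0..x, κ s) := by
  simp [enorm2, zeroModeB, Complex.norm_exp, Real.sqrt_sq (Real.exp_pos _).le]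

lemma hasDerivAt_zeroModeB_snd (hκ : Continuous κ) (x : ℝ) :
    HasDerivAt (fun y => (zeroModeB κ y).2) (-(κ x : ℂ) * (zeroModeB κ x).2) x := by
  have h := ((hκ.integral_hasStrictDerivAt 0 x).hasDerivAt.neg.ofReal_comp).cexp
  simpa [zeroModeB, mul_comm] using h

lemma contDiff_zeroModeB (hκ : Continuous κ) : ContDiff ℝ 1 (zeroModeB κ) :=
  contDiff_const.prodMk <| Complex.contDiff_exp.comp <|
    Complex.ofRealCLM.contDiff.comp (contDiff_integral_zero hκ).neg

lemma diracZero_zeroModeB (hκ : Continuous κ) : DiracZero κ (zeroModeB κ) := fun x => by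
  refine ⟨?_, ?_⟩
  · rw [(hasDerivAt_zeroModeB_snd hκ x).deriv]
    ring
  · simp [zeroModeB]

lemma isDecayingZeroMode_zeroModeB (hκ : Continuous κ) {κp κm : ℝ}
    (hp : Tendsto κ atTop (nhds κp)) (hm : Tendsto κ atBot (nhds κm))
    (hκp : 0 < κp) (hκm : κm < 0) :
    IsDecayingZeroMode κ κp (-κm) (zeroModeB κ) := by
  have hdecay : ∀ lam < min κp (-κm),
      ∃ C > (0 : ℝ), ∀ x, enorm2 (zeroModeB κ x) ≤ C * Real.exp (-lam * |x|) := by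
    intro lam hlam
    simp only [enorm2_zeroModeB]
    exact exists_exp_neg_integral_le_mul_exp_neg_mul_abs hκ
      (hp.eventually (eventually_ge_nhds (lt_min_iff.1 hlam).1))
      (hm.eventually (eventually_le_nhds (by linarith [(lt_min_iff.1 hlam).2])))
  have hmin : 0 < min κp (-κm) := lt_min hκp (neg_pos.2 hκm)
  obtain ⟨C, -, hC⟩ := hdecay _ (half_lt_self hmin)
  refine ⟨⟨0, zeroModeB_ne_zero 0⟩, contDiff_zeroModeB hκ, diracZero_zeroModeB hκ, ?_,
    fun lam _ => hdecay lam⟩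
  simp only [enorm2_zeroModeB] at hC ⊢
  refine integrable_sq_of_abs_le_mul_exp_neg_mul_abs (C := C) ?_ (half_pos hmin) fun x => ?_
  · exact (contDiff_integral_zero hκ).continuous.neg.rexp.aestronglyMeasurable
  · simpa only [abs_of_pos (Real.exp_pos _)] using hC x

lemma DiracZero.neg_swap {Ψ : ℝ → ℂ × ℂ} (h : DiracZero κ Ψ) :
    DiracZero (-κ) (Prod.swap ∘ Ψ) := fun x => by
  obtain ⟨h₁, h₂⟩ := h x
  constructor
  · simpa [Function.comp_def, sub_eq_add_neg] using h₂
  · simpa [Function.comp_def, sub_eq_add_neg] using h₁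

lemma enorm2_swap (v : ℂ × ℂ) : enorm2 v.swap = enorm2 v := by
  simp [enorm2, add_comm]

lemma IsDecayingZeroMode.neg_swap {a b : ℝ} {Ψ : ℝ → ℂ × ℂ} (h : IsDecayingZeroMode κ a b Ψ) :
    IsDecayingZeroMode (-κ) a b (Prod.swap ∘ Ψ) := by
  obtain ⟨⟨x, hx⟩, hC1, hD, hL2, hdecay⟩ := h
  simp only [IsDecayingZeroMode, Function.comp_apply, enorm2_swap]
  exact ⟨⟨x, by simpa [Prod.ext_iff, and_comm] using hx⟩, hC1.snd.prodMk hC1.fst, hD.neg_swap,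
    hL2, hdecay⟩

lemma zeroModeA_eq_swap_comp_zeroModeB : zeroModeA κ = Prod.swap ∘ zeroModeB (-κ) := by
  funext x
  simp [zeroModeA, zeroModeB, intervalIntegral.integral_neg]

end ZeroMode

theorem domain_wall_zero_mode_general
    (κ : ℝ → ℝ) (hκ : Continuous κ) (κp κm : ℝ)
    (hp : Tendsto κ atTop (nhds κp))
    (hm : Tendsto κ atBot (nhds κm)) :
    ((0 < κp ∧ κm < 0) →
      ((∃ x, zeroModeB κ x ≠ 0) ∧ ContDiff ℝ 1 (zeroModeB κ) ∧
        DiracZero κ (zeroModeB κ) ∧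
        Integrable (fun x => enorm2 (zeroModeB κ x) ^ 2) ∧
        ∀ lam : ℝ, 0 < lam → lam < min κp (-κm) →
          ∃ C > (0 : ℝ), ∀ x : ℝ, enorm2 (zeroModeB κ x) ≤ C * Real.exp (-lam * |x|))) ∧
    ((κp < 0 ∧ 0 < κm) →
      ((∃ x, zeroModeA κ x ≠ 0) ∧ ContDiff ℝ 1 (zeroModeA κ) ∧
        DiracZero κ (zeroModeA κ) ∧
        Integrable (fun x => enorm2 (zeroModeA κ x) ^ 2) ∧
        ∀ lam : ℝ, 0 < lam → lam < min (-κp) κm →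
          ∃ C > (0 : ℝ), ∀ x : ℝ, enorm2 (zeroModeA κ x) ≤ C * Real.exp (-lam * |x|))) := by
  refine ⟨fun ⟨hκp, hκm⟩ => isDecayingZeroMode_zeroModeB hκ hp hm hκp hκm, fun ⟨hκp, hκm⟩ => ?_⟩
  have h := (isDecayingZeroMode_zeroModeB hκ.neg hp.neg hm.neg (neg_pos.2 hκp)
    (neg_lt_zero.2 hκm)).neg_swap
  simp only [neg_neg, ← zeroModeA_eq_swap_comp_zeroModeB] at h
  exact h

/-- For a continuous domain-wall potential `κ` with limits `κ₊, κ₋` of opposite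
signs at `±∞`, zero is an `L²` eigenvalue of the Dirac operator `𝒟` with an explicit,
exponentially decaying eigenfunction supported on one sublattice. -/
theorem domain_wall_zero_mode
    (κ : ℝ → ℝ) (hκ : Continuous κ) (κp κm : ℝ)
    (hp : Tendsto κ atTop (nhds κp))
    (hm : Tendsto κ atBot (nhds κm))
    (hsign : κp * κm < 0) :
    ((0 < κp ∧ κm < 0) →
      ((∃ x, zeroModeB κ x ≠ 0) ∧ ContDiff ℝ 1 (zeroModeB κ) ∧
        DiracZero κ (zeroModeB κ) ∧
        Integrable (fun x => enorm2 (zeroModeB κ x) ^ 2) ∧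
        ∀ lam : ℝ, 0 < lam → lam < min κp (-κm) →
          ∃ C > (0 : ℝ), ∀ x : ℝ, enorm2 (zeroModeB κ x) ≤ C * Real.exp (-lam * |x|))) ∧
    ((κp < 0 ∧ 0 < κm) →
      ((∃ x, zeroModeA κ x ≠ 0) ∧ ContDiff ℝ 1 (zeroModeA κ) ∧
        DiracZero κ (zeroModeA κ) ∧
        Integrable (fun x => enorm2 (zeroModeA κ x) ^ 2) ∧
        ∀ lam : ℝ, 0 < lam → lam < min (-κp) κm →
          ∃ C > (0 : ℝ), ∀ x : ℝ, enorm2 (zeroModeA κ x) ≤ C * Real.exp (-lam * |x|))) :=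
  domain_wall_zero_mode_general κ hκ κp κm hp hm
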